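/- arXiv:1009.2060 — 4 statements merged into one kernel-verified Lean document; each statement's English description precedes it below -/
import Mathlib

section
/- There is a bijection between the set of trees on [n] rooted at 1 whose set of leaves is exactly L (where |L| = k, 2 ≤ k ≤ n-1, and leaves are computed in the underlying undirected tree) and the set of ordered set partitions of {2,...,n-1} into n-k nonempty parts. -/
/-!
Removing a leaf `ℓ ∈ L` from a tree whose leaf set is `L` gives a tree on the remaining vertices;
the neighbour `u` of `ℓ` is not in `L`, and it is a leaf of the smaller tree or not. Conversely,
attaching `ℓ` to any `u ∉ L` of a tree on the other vertices whose leaves agree with `L` away from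
`u` gives back a tree with leaf set `L`. So the number `T(n, k)` of trees on `n` vertices with a
prescribed leaf set of size `k` satisfies `T(n, k) = (n - k) (T(n - 1, k) + T(n - 1, k - 1))`, which
is the recursion `S(m + 1, j) = j (S(m, j) + S(m, j - 1))` of the number of surjections
`[m] → [j]` (split by the image `c` of the last point and by whether the others still reach `c`).
Both start from `T(2, 2) = S(0, 0) = 1`, hence `T(n, k) = S(n - 2, n - k)`; and ordered partitions
of `{2, …, n - 1}` into `n - k` blocks are exactly the fibres of surjections onto `Fin (n - k)`.
-/

open Function

universe u

noncomputable section

def numSurjections (m j : ℕ) : ℕ := Nat.card {f : Fin m → Fin j // Surjective f}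

def Equiv.surjectiveCongr {α β γ δ : Type*} (e : α ≃ β) (e' : γ ≃ δ) :
    {f : α → γ // Surjective f} ≃ {f : β → δ // Surjective f} :=
  Equiv.subtypeEquiv (e.arrowCongr e') fun f => by
    change Surjective f ↔ Surjective (e' ∘ f ∘ e.symm)
    rw [Equiv.comp_surjective, Equiv.surjective_comp]

theorem card_surjective_eq_numSurjections (α γ : Type*) [Finite α] [Finite γ] :
    Nat.card {f : α → γ // Surjective f} = numSurjections (Nat.card α) (Nat.card γ) :=
  Nat.card_congr (.surjectiveCongr (Finite.equivFin α) (Finite.equivFin γ))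

theorem numSurjections_eq_zero_of_lt {m j : ℕ} (h : m < j) : numSurjections m j = 0 := by
  refine Nat.card_eq_zero.mpr (Or.inl ⟨fun f => ?_⟩)
  have := Fintype.card_le_of_surjective f.1 f.2
  simp only [Fintype.card_fin] at this
  omega

theorem numSurjections_zero_zero : numSurjections 0 0 = 1 :=
  Nat.card_eq_one_iff_unique.mpr ⟨inferInstance, ⟨⟨finZeroElim, finZeroElim⟩⟩⟩

def snocSurjection {m : ℕ} {β : Type*}
    (p : Σ c : β, {g : Fin m → β // Surjective g} ⊕ {g : Fin m → {y // y ≠ c} // Surjective g}) :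
      {f : Fin (m + 1) → β // Surjective f} :=
  ⟨Fin.snoc (p.2.elim (·.1) fun g i => (g.1 i).1) p.1, fun y => by
    obtain ⟨c, g | g⟩ := p
    · obtain ⟨i, hi⟩ := g.2 y
      exact ⟨i.castSucc, by simpa using hi⟩
    · by_cases hy : y = c
      · exact ⟨Fin.last m, by simp [hy]⟩
      · obtain ⟨i, hi⟩ := g.2 ⟨y, hy⟩
        exact ⟨i.castSucc, by simp [hi]⟩⟩

theorem snocSurjection_bijective (m : ℕ) (β : Type*) :
    Bijective (snocSurjection (m := m) (β := β)) := by
  constructor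
  · rintro ⟨c₁, g₁ | g₁⟩ ⟨c₂, g₂ | g₂⟩ h <;>
      obtain ⟨hg, rfl⟩ := (Fin.snoc_inj (α := fun _ => β)).mp (congrArg Subtype.val h) <;>
      simp only [Sum.elim_inl, Sum.elim_inr] at hg
    · rw [Subtype.ext hg]
    · obtain ⟨i, hi⟩ := g₁.2 c₁
      exact ((g₂.1 i).2 ((congrFun hg i).symm.trans hi)).elim
    · obtain ⟨i, hi⟩ := g₂.2 c₁
      exact ((g₁.1 i).2 ((congrFun hg i).trans hi)).elim
    · rw [Subtype.ext (funext fun i => Subtype.ext (congrFun hg i))]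
  · rintro ⟨f, hf⟩
    have hsnoc : Fin.snoc (Fin.init f) (f (Fin.last m)) = f := Fin.snoc_init_self f
    by_cases hg : Surjective (Fin.init f)
    · exact ⟨⟨_, .inl ⟨_, hg⟩⟩, Subtype.ext hsnoc⟩
    · -- the restriction misses only `f (last m)`, which it therefore never takes
      have hmiss : ∀ i, Fin.init f i ≠ f (Fin.last m) := by
        refine fun i hi => hg fun y => ?_
        obtain ⟨a, rfl⟩ := hf y
        refine Fin.lastCases ⟨i, hi⟩ (fun b => ⟨b, rfl⟩) a
      refine ⟨⟨_, .inr ⟨fun i => ⟨_, hmiss i⟩, fun ⟨y, hy⟩ => ?_⟩⟩, Subtype.ext hsnoc⟩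
      obtain ⟨a, rfl⟩ := hf y
      induction a using Fin.lastCases with
      | last => exact (hy rfl).elim
      | cast b => exact ⟨b, rfl⟩

theorem numSurjections_succ (m j : ℕ) :
    numSurjections (m + 1) j = j * (numSurjections m j + numSurjections m (j - 1)) := by
  classical
  rw [numSurjections, ← Nat.card_eq_of_bijective _ (snocSurjection_bijective m (Fin j)),
    Nat.card_sigma]
  have hne : ∀ c : Fin j, Nat.card {x // x ≠ c} = j - 1 := by simp [Nat.card_eq_fintype_card]
  simp only [Nat.card_sum, card_surjective_eq_numSurjections, Nat.card_fin, hne,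
    Finset.sum_const, Finset.card_univ, Fintype.card_fin, smul_eq_mul]

def fibersOfSurjective {α ι : Type*} (f : {f : α → ι // Surjective f}) :
    {π : ι → Set α // (∀ j, (π j).Nonempty) ∧ (∀ j j', j ≠ j' → Disjoint (π j) (π j')) ∧
      ⋃ j, π j = Set.univ} :=
  ⟨fun j => f.1 ⁻¹' {j}, fun j => f.2 j,
    fun _ _ hjj' => Set.disjoint_left.mpr fun _ hx hx' => hjj' (hx.symm.trans hx'),
    Set.iUnion_eq_univ_iff.mpr fun x => ⟨f.1 x, rfl⟩⟩

theorem fibersOfSurjective_bijective (α ι : Type*) :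
    Bijective (fibersOfSurjective (α := α) (ι := ι)) := by
  constructor
  · intro f g h
    have hfib : ∀ j, f.1 ⁻¹' {j} = g.1 ⁻¹' {j} := congrFun (congrArg Subtype.val h)
    exact Subtype.ext <| funext fun x => ((hfib (f.1 x)).subset rfl).symm
  · rintro ⟨π, hne, hdisj, hcover⟩
    choose f hf using Set.iUnion_eq_univ_iff.mp hcover
    have hf_eq : ∀ x j, x ∈ π j ↔ f x = j := fun x j =>
      ⟨fun hx => by_contra fun hne' => Set.disjoint_left.mp (hdisj _ _ hne') (hf x) hx,
        fun h => h ▸ hf x⟩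
    refine ⟨⟨f, fun j => (hne j).imp fun x hx => (hf_eq x j).mp hx⟩, ?_⟩
    exact Subtype.ext <| funext fun j => Set.ext fun x => (hf_eq x j).symm

theorem card_subtype_forall_ne_iff_eq_add {α W : Type*} [Finite α] (P : α → Prop)
    (Q : α → W → Prop) {v : W} {S : Set W} (hv : v ∉ S) :
    Nat.card {a // P a ∧ ∀ x, x ≠ v → (Q a x ↔ x ∈ S)} =
      Nat.card {a // P a ∧ ∀ x, Q a x ↔ x ∈ insert v S} +
        Nat.card {a // P a ∧ ∀ x, Q a x ↔ x ∈ S} := by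
  classical
  rw [← Nat.card_sum]
  refine Nat.card_congr <| (Equiv.sumCompl fun a : {a // P a ∧ ∀ x, x ≠ v → (Q a x ↔ x ∈ S)} =>
    Q a.1 v).symm.trans <| Equiv.sumCongr
      ((Equiv.subtypeSubtypeEquivSubtypeInter _ (Q · v)).trans
        (Equiv.subtypeEquivRight fun a => by grind))
      ((Equiv.subtypeSubtypeEquivSubtypeInter _ (¬ Q · v)).trans
        (Equiv.subtypeEquivRight fun a => by grind))

namespace SimpleGraph

variable {V : Type*} {G : SimpleGraph V} {ℓ : V}

theorem Walk.IsCycle.notMem_support_of_subsingleton_neighborSet {a : V} {c : G.Walk a a}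
    (hc : c.IsCycle) (hℓ : (G.neighborSet ℓ).Subsingleton) : ℓ ∉ c.support := by
  intro hmem
  obtain ⟨x, y, hxy, hnbr⟩ := Set.ncard_eq_two.mp (hc.ncard_neighborSet_toSubgraph_eq_two hmem)
  have hsub := c.toSubgraph.neighborSet_subset ℓ
  rw [hnbr] at hsub
  exact hxy (hℓ (hsub (by simp)) (hsub (by simp)))

theorem isAcyclic_of_induce_compl_singleton (hℓ : (G.neighborSet ℓ).Subsingleton)
    (h : (G.induce {ℓ}ᶜ).IsAcyclic) : G.IsAcyclic := by
  intro a c hc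
  have hc' : ∀ x ∈ c.support, x ∈ ({ℓ}ᶜ : Set V) := fun x hx hxℓ =>
    hc.notMem_support_of_subsingleton_neighborSet hℓ (hxℓ ▸ hx)
  refine h (c.induce _ hc') ((Walk.isCycle_map_iff_of_injective
    (f := (Embedding.induce _).toHom) Subtype.val_injective).mp ?_)
  rwa [Walk.map_induce c hc']

theorem isTree_iff_induce_compl_singleton {u : V} (hℓ : G.neighborSet ℓ = {u}) :
    G.IsTree ↔ (G.induce {ℓ}ᶜ).IsTree := by
  have hadj : G.Adj ℓ u := (G.mem_neighborSet ℓ u).mp (hℓ ▸ rfl)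
  have hsub : (G.neighborSet ℓ).Subsingleton := hℓ ▸ Set.subsingleton_singleton
  have hu : u ∈ ({ℓ}ᶜ : Set V) := hadj.ne'
  refine ⟨fun hT => ⟨?_, hT.isAcyclic.induce _⟩, fun hT => ⟨?_, ?_⟩⟩
  · refine (connected_iff _).mpr ⟨?_, ⟨⟨u, hu⟩⟩⟩
    refine hT.connected.preconnected.induce_of_degree_eq_one fun v hv => ?_
    rwa [Set.notMem_compl_iff.mp hv]
  · have hreach : ∀ a, G.Reachable a u := fun a => by
      by_cases ha : a = ℓ
      · exact ha ▸ hadj.reachable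
      · exact (hT.connected.preconnected ⟨a, ha⟩ ⟨u, hu⟩).map (Embedding.induce _).toHom
    exact (connected_iff _).mpr ⟨fun a b => (hreach a).trans (hreach b).symm, ⟨u⟩⟩
  · exact isAcyclic_of_induce_compl_singleton hsub hT.isAcyclic

variable (ℓ) in
def attachLeaf (G' : SimpleGraph ({ℓ}ᶜ : Set V)) (u : ({ℓ}ᶜ : Set V)) : SimpleGraph V :=
  G'.map Subtype.val ⊔ edge ℓ u

theorem neighborSet_attachLeaf_self (G' : SimpleGraph ({ℓ}ᶜ : Set V)) (u : ({ℓ}ᶜ : Set V)) :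
    (attachLeaf ℓ G' u).neighborSet ℓ = {↑u} := by
  have hu : (u : V) ≠ ℓ := u.2
  ext b
  simp only [mem_neighborSet, attachLeaf, sup_adj, map_adj', edge_adj]
  grind

theorem induce_attachLeaf (G' : SimpleGraph ({ℓ}ᶜ : Set V)) (u : ({ℓ}ᶜ : Set V)) :
    (attachLeaf ℓ G' u).induce {ℓ}ᶜ = G' := by
  ext a b
  have ha : (a : V) ≠ ℓ := a.2
  have hb : (b : V) ≠ ℓ := b.2
  simp [attachLeaf, edge_adj, map_adj', ha, hb]
  exact fun h => h.ne ∘ Subtype.ext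

theorem eq_of_neighborSet_eq_of_induce_eq {H : SimpleGraph V}
    (hℓ : G.neighborSet ℓ = H.neighborSet ℓ) (hind : G.induce {ℓ}ᶜ = H.induce {ℓ}ᶜ) : G = H := by
  have hℓ' : ∀ b, G.Adj ℓ b ↔ H.Adj ℓ b := Set.ext_iff.mp hℓ
  ext a b
  by_cases ha : a = ℓ
  · exact ha ▸ hℓ' b
  by_cases hb : b = ℓ
  · rw [G.adj_comm, H.adj_comm]
    exact hb ▸ hℓ' a
  exact Iff.of_eq (congrArg (fun K : SimpleGraph ({ℓ}ᶜ : Set V) => K.Adj ⟨a, ha⟩ ⟨b, hb⟩) hind)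

theorem eq_attachLeaf_iff {G' : SimpleGraph ({ℓ}ᶜ : Set V)} {u : ({ℓ}ᶜ : Set V)} :
    G = attachLeaf ℓ G' u ↔ G.neighborSet ℓ = {↑u} ∧ G.induce {ℓ}ᶜ = G' := by
  refine ⟨?_, fun ⟨hℓ, hind⟩ => ?_⟩
  · rintro rfl
    exact ⟨neighborSet_attachLeaf_self G' u, induce_attachLeaf G' u⟩
  · refine eq_of_neighborSet_eq_of_induce_eq (ℓ := ℓ) ?_ ?_
    · rw [hℓ, neighborSet_attachLeaf_self]
    · rw [hind, induce_attachLeaf]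

section Leaves

variable {u : ({ℓ}ᶜ : Set V)}

theorem ncard_neighborSet_of_ne (hℓ : G.neighborSet ℓ = {↑u}) {x : ({ℓ}ᶜ : Set V)} (hx : x ≠ u) :
    (G.neighborSet x).ncard = ((G.induce {ℓ}ᶜ).neighborSet x).ncard := by
  rw [neighborSet_induce, Set.ncard_preimage_of_injective_subset_range Subtype.val_injective]
  rintro b hb
  refine ⟨⟨b, fun hbℓ => hx (Subtype.ext ?_)⟩, rfl⟩
  have : (x : V) ∈ G.neighborSet ℓ := (G.mem_neighborSet _ _).mpr (hbℓ ▸ hb : G.Adj x ℓ).symm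
  rwa [hℓ] at this

theorem ncard_neighborSet_eq_add_one [Finite V] (hℓ : G.neighborSet ℓ = {↑u}) :
    (G.neighborSet u).ncard = ((G.induce {ℓ}ᶜ).neighborSet u).ncard + 1 := by
  have hnbr : G.neighborSet u = insert ℓ (Subtype.val '' (G.induce {ℓ}ᶜ).neighborSet u) := by
    ext b
    by_cases hb : b = ℓ
    · subst hb
      simp only [Set.mem_insert_iff, true_or, iff_true, mem_neighborSet]
      exact ((G.mem_neighborSet _ _).mp (hℓ ▸ rfl)).symm
    · simp [hb]
  rw [hnbr, Set.ncard_insert_of_notMem (by rintro ⟨x, -, hx⟩; exact x.2 hx),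
    Set.ncard_image_of_injective _ Subtype.val_injective]

theorem leaves_eq_iff_induce_compl_singleton [Finite V] (hℓ : G.neighborSet ℓ = {↑u})
    (hu : ((G.induce {ℓ}ᶜ).neighborSet u).Nonempty) {L : Set V} (hℓL : ℓ ∈ L) :
    (∀ i, (G.neighborSet i).ncard = 1 ↔ i ∈ L) ↔
      ↑u ∉ L ∧ ∀ x, x ≠ u → (((G.induce {ℓ}ᶜ).neighborSet x).ncard = 1 ↔ ↑x ∈ L) := by
  have hu₂ : (G.neighborSet u).ncard ≠ 1 := by
    rw [ncard_neighborSet_eq_add_one hℓ]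
    have := (Set.ncard_pos).mpr hu
    omega
  constructor
  · intro h
    refine ⟨fun huL => hu₂ ((h u).mpr huL), fun x hx => ?_⟩
    rw [← ncard_neighborSet_of_ne hℓ hx]
    exact h x
  · rintro ⟨huL, h⟩ i
    by_cases hi : i = ℓ
    · subst hi
      simp [hℓ, hℓL]
    lift i to ({ℓ}ᶜ : Set V) using hi
    by_cases hx : i = u
    · subst hx
      exact iff_of_false hu₂ huL
    · rw [ncard_neighborSet_of_ne hℓ hx]
      exact h i hx

end Leaves

abbrev TreesWithLeaves (L : Set V) : Type _ :=
  {G : SimpleGraph V // G.IsTree ∧ ∀ i, (G.neighborSet i).ncard = 1 ↔ i ∈ L}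

section

variable [Finite V] {L : Set V}

def attachLeafTree [Nontrivial ({ℓ}ᶜ : Set V)] (hℓL : ℓ ∈ L)
    (p : Σ u : {u : ({ℓ}ᶜ : Set V) // ↑u ∉ L}, {G' : SimpleGraph ({ℓ}ᶜ : Set V) //
      G'.IsTree ∧ ∀ x, x ≠ u.1 → ((G'.neighborSet x).ncard = 1 ↔ x ∈ Subtype.val ⁻¹' L)}) :
    TreesWithLeaves L :=
  ⟨attachLeaf ℓ p.2.1 p.1.1, by
    obtain ⟨⟨u, huL⟩, G', hT, hleaves⟩ := p
    obtain ⟨hℓ, hind⟩ := eq_attachLeaf_iff.mp (rfl : attachLeaf ℓ G' u = _)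
    rw [← hind] at hT hleaves
    refine ⟨(isTree_iff_induce_compl_singleton hℓ).mpr hT, ?_⟩
    exact (leaves_eq_iff_induce_compl_singleton hℓ
      (hT.connected.preconnected.exists_adj_of_nontrivial u) hℓL).mpr ⟨huL, hleaves⟩⟩

theorem attachLeafTree_bijective [Nontrivial ({ℓ}ᶜ : Set V)] (hℓL : ℓ ∈ L) :
    Bijective (attachLeafTree hℓL) := by
  constructor
  · rintro ⟨⟨u₁, hu₁⟩, G₁, hG₁⟩ ⟨⟨u₂, hu₂⟩, G₂, hG₂⟩ h
    obtain ⟨hℓ, hind⟩ := eq_attachLeaf_iff.mp (congrArg Subtype.val h)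
    dsimp only [attachLeafTree] at hℓ hind
    rw [neighborSet_attachLeaf_self, Set.singleton_eq_singleton_iff, Subtype.val_inj] at hℓ
    rw [induce_attachLeaf] at hind
    subst hℓ hind
    rfl
  · rintro ⟨G, hT, hleaves⟩
    obtain ⟨u, hℓ⟩ := Set.ncard_eq_one.mp ((hleaves ℓ).mpr hℓL)
    have hu : u ∈ ({ℓ}ᶜ : Set V) := ((G.mem_neighborSet _ _).mp (hℓ ▸ rfl)).ne'
    lift u to ({ℓ}ᶜ : Set V) using hu
    have hT' := (isTree_iff_induce_compl_singleton hℓ).mp hT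
    obtain ⟨huL, hleaves'⟩ := (leaves_eq_iff_induce_compl_singleton hℓ
      (hT'.connected.preconnected.exists_adj_of_nontrivial u) hℓL).mp hleaves
    exact ⟨⟨⟨u, huL⟩, G.induce {ℓ}ᶜ, hT', hleaves'⟩,
      Subtype.ext (eq_attachLeaf_iff.mpr ⟨hℓ, rfl⟩).symm⟩

end

open scoped Classical in
theorem card_treesWithLeaves_eq_sum [Fintype V] {L : Set V} [Nontrivial ({ℓ}ᶜ : Set V)]
    (hℓL : ℓ ∈ L) :
    Nat.card (TreesWithLeaves L) = ∑ u : {u : ({ℓ}ᶜ : Set V) // ↑u ∉ L},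
      (Nat.card (TreesWithLeaves (insert u.1 (Subtype.val ⁻¹' L))) +
        Nat.card (TreesWithLeaves (Subtype.val ⁻¹' L : Set ({ℓ}ᶜ : Set V)))) := by
  rw [← Nat.card_eq_of_bijective _ (attachLeafTree_bijective hℓL), Nat.card_sigma]
  exact Finset.sum_congr rfl fun u _ => card_subtype_forall_ne_iff_eq_add _ _ u.2

theorem IsTree.two_le_ncard_of_leaves [Finite V] [Nontrivial V] {L : Set V} (hT : G.IsTree)
    (hL : ∀ i, (G.neighborSet i).ncard = 1 ↔ i ∈ L) : 2 ≤ L.ncard := by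
  classical
  have := Fintype.ofFinite V
  obtain ⟨u, v, huv, hu, hv⟩ := hT.exists_ne_and_degree_eq_one
  have hdeg : ∀ w, (G.neighborSet w).ncard = G.degree w := fun w => by
    rw [← card_neighborSet_eq_degree, ← Nat.card_eq_fintype_card, Nat.card_coe_set_eq]
  exact (Set.one_lt_ncard).mpr ⟨u, (hL u).mp (hdeg u ▸ hu), v, (hL v).mp (hdeg v ▸ hv), huv⟩

theorem Preconnected.neighborSet_eq_compl_singleton [Finite V] (hG : G.Preconnected)
    (hV : Nat.card V = 2) (a : V) : G.neighborSet a = {a}ᶜ := by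
  have : Nontrivial V := Finite.one_lt_card_iff_nontrivial.mp (by omega)
  obtain ⟨c, hc⟩ := hG.exists_adj_of_nontrivial a
  obtain ⟨y, -, huniq⟩ := (Nat.card_eq_two_iff' a).mp hV
  ext b
  refine ⟨fun h => (G.ne_of_adj h).symm, fun hb => ?_⟩
  rwa [(huniq b hb).trans (huniq c hc.ne').symm]

theorem card_treesWithLeaves_of_card_eq_two [Finite V] (hV : Nat.card V = 2) (L : Set V) :
    Nat.card (TreesWithLeaves L) = numSurjections 0 (2 - L.ncard) := by
  have : Nontrivial V := Finite.one_lt_card_iff_nontrivial.mp (by omega)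
  have hleaf : ∀ {G : SimpleGraph V}, G.Connected → ∀ a, (G.neighborSet a).ncard = 1 := by
    intro G hG a
    rw [hG.preconnected.neighborSet_eq_compl_singleton hV, Set.ncard_compl, Set.ncard_singleton, hV]
  by_cases hL : L = Set.univ
  · subst hL
    rw [Set.ncard_univ, hV, Nat.sub_self, numSurjections_zero_zero, Nat.card_eq_one_iff_unique]
    refine ⟨⟨fun G H => Subtype.ext ?_⟩, ⟨⟨⊤, ⟨connected_top, .of_card_le_two ?_⟩, fun a => ?_⟩⟩⟩
    · ext a b
      rw [← mem_neighborSet, ← mem_neighborSet,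
        G.2.1.preconnected.neighborSet_eq_compl_singleton hV,
        H.2.1.preconnected.neighborSet_eq_compl_singleton hV]
    · rw [ENat.card_eq_coe_natCard, hV]
      rfl
    · exact iff_of_true (hleaf connected_top a) trivial
  · have hlt : L.ncard < 2 :=
      hV ▸ Set.ncard_univ V ▸ Set.ncard_lt_ncard (Set.ssubset_univ_iff.mpr hL)
    have : IsEmpty (TreesWithLeaves L) := ⟨fun G => (G.2.1.two_le_ncard_of_leaves G.2.2).not_gt hlt⟩
    rw [Nat.card_of_isEmpty, numSurjections_eq_zero_of_lt (by omega)]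

theorem card_treesWithLeaves {n : ℕ} (hn : 2 ≤ n) :
    ∀ {V : Type u} [Finite V] (L : Set V), Nat.card V = n →
      Nat.card (TreesWithLeaves L) = numSurjections (n - 2) (n - L.ncard) := by
  induction n, hn using Nat.le_induction with
  | base => exact fun L hV => card_treesWithLeaves_of_card_eq_two hV L
  | succ n hn ih =>
    intro V _ L hV
    have : Nontrivial V := Finite.one_lt_card_iff_nontrivial.mp (by omega)
    rcases L.eq_empty_or_nonempty with rfl | ⟨ℓ, hℓL⟩
    · have : IsEmpty (TreesWithLeaves (∅ : Set V)) :=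
        ⟨fun G => by simpa using G.2.1.two_le_ncard_of_leaves G.2.2⟩
      rw [Nat.card_of_isEmpty, Set.ncard_empty, numSurjections_eq_zero_of_lt (by omega)]
    classical
    have := Fintype.ofFinite V
    have hcompl : Nat.card ({ℓ}ᶜ : Set V) = n := by
      rw [Nat.card_coe_set_eq, Set.ncard_compl, Set.ncard_singleton, hV, Nat.add_sub_cancel]
    have : Nontrivial ({ℓ}ᶜ : Set V) := Finite.one_lt_card_iff_nontrivial.mp (by omega)
    have hL₀ : 0 < L.ncard := (Set.ncard_pos).mpr ⟨ℓ, hℓL⟩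
    have hL' : (Subtype.val ⁻¹' L : Set ({ℓ}ᶜ : Set V)).ncard = L.ncard - 1 := by
      have hpre : (Subtype.val ⁻¹' L : Set ({ℓ}ᶜ : Set V)) = Subtype.val ⁻¹' (L \ {ℓ}) := by
        ext x
        simp
      rw [hpre, Set.ncard_preimage_of_injective_subset_range Subtype.val_injective
        fun x hx => ⟨⟨x, hx.2⟩, rfl⟩, Set.ncard_sdiff_singleton_of_mem hℓL]
    have hsummand : ∀ u : {u : ({ℓ}ᶜ : Set V) // ↑u ∉ L},
        Nat.card (TreesWithLeaves (insert u.1 (Subtype.val ⁻¹' L))) +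
          Nat.card (TreesWithLeaves (Subtype.val ⁻¹' L : Set ({ℓ}ᶜ : Set V))) =
          numSurjections (n - 2) (n + 1 - L.ncard - 1) +
            numSurjections (n - 2) (n + 1 - L.ncard) := by
      intro u
      have hu : u.1 ∉ (Subtype.val ⁻¹' L : Set ({ℓ}ᶜ : Set V)) := u.2
      rw [ih _ hcompl, ih _ hcompl, Set.ncard_insert_of_notMem hu, hL']
      congr 2 <;> omega
    have hcard : Fintype.card {u : ({ℓ}ᶜ : Set V) // ↑u ∉ L} = n + 1 - L.ncard := by
      have e : {u : ({ℓ}ᶜ : Set V) // ↑u ∉ L} ≃ (Lᶜ : Set V) :=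
        Equiv.subtypeSubtypeEquivSubtype (p := (· ∈ ({ℓ}ᶜ : Set V))) (q := (· ∉ L))
          fun hx hxℓ => hx (Set.mem_singleton_iff.mp hxℓ ▸ hℓL)
      rw [Fintype.card_eq_nat_card, Nat.card_congr e, Nat.card_coe_set_eq, Set.ncard_compl, hV]
    rw [card_treesWithLeaves_eq_sum hℓL, Finset.sum_congr rfl fun u _ => hsummand u,
      Finset.sum_const, Finset.card_univ, hcard, smul_eq_mul, show n + 1 - 2 = n - 2 + 1 by omega,
      numSurjections_succ]
    ring

end SimpleGraph

theorem stmt6_general (n k : ℕ) (hn : 3 ≤ n)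
    (L : Finset (Fin n)) (hL : L.card = k) :
    Nonempty
      ({G : SimpleGraph (Fin n) //
          G.IsTree ∧ ∀ i, ((G.neighborSet i).ncard = 1 ↔ i ∈ L)} ≃
       {π : Fin (n - k) → Set {i : ℕ // 2 ≤ i ∧ i ≤ n - 1} //
          (∀ j, (π j).Nonempty) ∧ (∀ j j', j ≠ j' → Disjoint (π j) (π j')) ∧
            (⋃ j, π j) = Set.univ}) := by
  have : Finite {i : ℕ // 2 ≤ i ∧ i ≤ n - 1} := inferInstanceAs (Finite (Set.Icc 2 (n - 1)))
  have hS : Nat.card {i : ℕ // 2 ≤ i ∧ i ≤ n - 1} = n - 2 :=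
    (Nat.card_coe_set_eq (Set.Icc 2 (n - 1))).trans ((Set.ncard_Icc_nat _ _).trans (by omega))
  have hTrees : Nat.card {G : SimpleGraph (Fin n) //
      G.IsTree ∧ ∀ i, ((G.neighborSet i).ncard = 1 ↔ i ∈ L)} = numSurjections (n - 2) (n - k) := by
    rw [← hL, ← Set.ncard_coe_finset]
    exact SimpleGraph.card_treesWithLeaves (by omega) (L : Set (Fin n)) (Nat.card_fin n)
  have e := Equiv.ofBijective _
    (fibersOfSurjective_bijective {i : ℕ // 2 ≤ i ∧ i ≤ n - 1} (Fin (n - k)))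
  have : Finite _ := Finite.of_equiv _ e
  refine Finite.card_eq.mp ?_
  rw [hTrees, ← Nat.card_congr e, card_surjective_eq_numSurjections, hS, Nat.card_fin]

/-- There is a bijection between the trees on `[n]` (rooted at vertex 1) whose
set of leaves is exactly `L` with `|L| = k`, and the ordered set partitions of
`{2,...,n-1}` into `n-k` nonempty parts. -/
theorem stmt6 (n k : ℕ) (hn : 3 ≤ n) (hk2 : 2 ≤ k) (hk : k ≤ n - 1)
    (L : Finset (Fin n)) (hL : L.card = k) :
    Nonempty
      ({G : SimpleGraph (Fin n) //
          G.IsTree ∧ ∀ i, ((G.neighborSet i).ncard = 1 ↔ i ∈ L)} ≃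
       {π : Fin (n - k) → Set {i : ℕ // 2 ≤ i ∧ i ≤ n - 1} //
          (∀ j, (π j).Nonempty) ∧ (∀ j j', j ≠ j' → Disjoint (π j) (π j')) ∧
            (⋃ j, π j) = Set.univ}) :=
  stmt6_general n k hn L hL
end
end

section
/- There is a bijection Θ between the set of functions f: {2,...,n-1} → [n] and the set of trees on [n] rooted at 1 (all edges directed toward 1), such that for every f and every vertex i ∈ [n], the degree of i in the undirected tree underlying Θ(f) equals 1 + |f⁻¹(i)|. -/
/-!
Prüfer's correspondence. A code `a :: c` on a vertex set `S` with `|S| = |a :: c| + 2` decodes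
to a tree on `S`: join `a` to the smallest vertex `l ∈ S` not occurring in the code, and decode
`c` on `S \ {l}`. In the decoded tree every `v ∈ S` has degree `1 + #(occurrences of v in the
code)`, so the leaves are exactly the vertices missing from the code. Hence `l` is the smallest
leaf and `a` its neighbour, which makes decoding injective; conversely, removing the smallest
leaf of an arbitrary tree and inducting shows that every tree is decoded from some code.

Trees on `S` are handled as edge sets that connect `S` and have `|S| - 1` edges, so that
acyclicity never has to be checked directly.
-/

open Finset SimpleGraph

theorem List.count_ofFn {α : Type*} [DecidableEq α] {m : ℕ} (g : Fin m → α) (a : α) :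
    (List.ofFn g).count a = Nat.card {k // g k = a} := by
  rw [← Multiset.coe_count, ← Fin.univ_val_map, Multiset.count_map, Nat.card_eq_fintype_card,
    Fintype.card_subtype]
  simp [eq_comm]
  rfl

namespace Pruefer

variable {V : Type*} {S : Finset V} {E : Finset (Sym2 V)}

structure IsTreeOn (S : Finset V) (E : Finset (Sym2 V)) : Prop where
  not_isDiag : ∀ e ∈ E, ¬e.IsDiag
  mem_of_mem_edge : ∀ e ∈ E, ∀ v ∈ e, v ∈ S
  card_add_one : #E + 1 = #S
  reachable : ∀ u ∈ S, ∀ v ∈ S, (fromEdgeSet (E : Set (Sym2 V))).Reachable u v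

structure IsCodeOn (S : Finset V) (c : List V) : Prop where
  mem : ∀ a ∈ c, a ∈ S
  card_eq : #S = c.length + 2

lemma IsCodeOn.univ [Fintype V] {k : ℕ} (hV : Fintype.card V = k + 2) (c : List.Vector V k) :
    IsCodeOn univ c.toList :=
  ⟨fun a _ => mem_univ a, by rw [card_univ, hV, c.toList_length]⟩

namespace IsTreeOn

lemma notMem_of_notMem (hT : IsTreeOn S E) {v : V} (hv : v ∉ S) : ∀ e ∈ E, v ∉ e :=
  fun e he hve => hv (hT.mem_of_mem_edge e he v hve)

lemma edgeSet_fromEdgeSet (hT : IsTreeOn S E) :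
    (fromEdgeSet (E : Set (Sym2 V))).edgeSet = E := by
  rw [SimpleGraph.edgeSet_fromEdgeSet, sdiff_eq_left, Set.disjoint_left]
  exact fun e he => hT.not_isDiag e he

end IsTreeOn

lemma isTree_fromEdgeSet [Fintype V] (hT : IsTreeOn univ E) :
    (fromEdgeSet (E : Set (Sym2 V))).IsTree := by
  rw [isTree_iff_connected_and_card, connected_iff, hT.edgeSet_fromEdgeSet, Nat.card_coe_set_eq,
    Set.ncard_coe_finset, Nat.card_eq_fintype_card, ← card_univ, ← hT.card_add_one]
  refine ⟨⟨fun u v => hT.reachable u (mem_univ u) v (mem_univ v), ?_⟩, rfl⟩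
  exact Fintype.card_pos_iff.mp (by rw [← card_univ, ← hT.card_add_one]; omega)

lemma isTreeOn_univ_edgeFinset [Fintype V] {G : SimpleGraph V} [Fintype G.edgeSet]
    (hG : G.IsTree) : IsTreeOn univ G.edgeFinset where
  not_isDiag _ he := G.not_isDiag_of_mem_edgeFinset he
  mem_of_mem_edge _ _ v _ := mem_univ v
  card_add_one := by rw [card_univ, hG.card_edgeFinset]
  reachable u _ v _ := by
    rw [coe_edgeFinset, fromEdgeSet_edgeSet]
    exact hG.connected u v

section Degree

variable [DecidableEq V]

def degree (E : Finset (Sym2 V)) (v : V) : ℕ := #{e ∈ E | v ∈ e}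

lemma degree_insert {e : Sym2 V} (he : e ∉ E) (v : V) :
    degree (insert e E) v = degree E v + if v ∈ e then 1 else 0 := by
  unfold degree
  rw [filter_insert]
  split_ifs
  · rw [card_insert_of_notMem fun h => he (mem_filter.mp h).1]
  · rfl

lemma degree_eq_zero {v : V} (h : ∀ e ∈ E, v ∉ e) : degree E v = 0 := by
  simpa [degree, filter_eq_empty_iff] using h

lemma sum_degree (hE : ∀ e ∈ E, ¬e.IsDiag) (hS : ∀ e ∈ E, ∀ v ∈ e, v ∈ S) :
    ∑ v ∈ S, degree E v = 2 * #E := by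
  have hdeg (e) (he : e ∈ E) : #{v ∈ S | v ∈ e} = 2 := by
    rw [← Sym2.card_toFinset_of_not_isDiag e (hE e he)]
    congr 1
    ext v
    simpa [Sym2.mem_toFinset] using hS e he v
  simp only [degree, card_filter]
  rw [sum_comm, mul_comm, ← smul_eq_mul, ← sum_const]
  exact sum_congr rfl fun e he => by rw [← card_filter, hdeg e he]

lemma ncard_neighborSet_fromEdgeSet (hE : ∀ e ∈ E, ¬e.IsDiag) (v : V) :
    ((fromEdgeSet (E : Set (Sym2 V))).neighborSet v).ncard = degree E v := by
  rw [← Set.ncard_image_of_injective _ (fun _ _ => Sym2.congr_right.mp), degree,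
    ← Set.ncard_coe_finset]
  congr 1
  ext e
  simp only [Set.mem_image, mem_neighborSet, fromEdgeSet_adj, coe_filter, mem_coe]
  constructor
  · rintro ⟨w, ⟨hw, -⟩, rfl⟩
    exact ⟨hw, Sym2.mem_mk_left v w⟩
  · rintro ⟨he, hve⟩
    refine ⟨Sym2.Mem.other hve, ⟨?_, (Sym2.other_ne (hE e he) hve).symm⟩, Sym2.other_spec hve⟩
    rwa [Sym2.other_spec hve]

lemma isTreeOn_pair {u v : V} (h : u ≠ v) : IsTreeOn {u, v} {s(u, v)} where
  not_isDiag := by simpa using h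
  mem_of_mem_edge := by simp
  card_add_one := by simp [h]
  reachable := by
    have hadj : (fromEdgeSet (({s(u, v)} : Finset (Sym2 V)) : Set (Sym2 V))).Adj u v := by
      simpa using h
    simp only [mem_insert, mem_singleton]
    rintro _ (rfl | rfl) _ (rfl | rfl)
    exacts [.rfl, hadj.reachable, hadj.symm.reachable, .rfl]

namespace IsTreeOn

lemma insert_leaf (hT : IsTreeOn S E) {l a : V} (hl : l ∉ S) (ha : a ∈ S) :
    IsTreeOn (insert l S) (insert s(l, a) E) where
  not_isDiag := by
    simp only [mem_insert, forall_eq_or_imp, Sym2.mk_isDiag_iff]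
    exact ⟨fun h => hl (h ▸ ha), hT.not_isDiag⟩
  mem_of_mem_edge := by
    simp only [mem_insert, forall_eq_or_imp, Sym2.mem_iff]
    exact ⟨by simp [ha], fun e he v hv => Or.inr (hT.mem_of_mem_edge e he v hv)⟩
  card_add_one := by
    rw [card_insert_of_notMem fun h => hT.notMem_of_notMem hl _ h (Sym2.mem_mk_left l a),
      card_insert_of_notMem hl, hT.card_add_one]
  reachable := by
    have hmono : fromEdgeSet (E : Set (Sym2 V)) ≤ fromEdgeSet ↑(insert s(l, a) E) :=
      fromEdgeSet_mono (by simp)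
    have hla : (fromEdgeSet (↑(insert s(l, a) E) : Set (Sym2 V))).Adj l a := by
      rw [fromEdgeSet_adj]
      exact ⟨by simp, fun h => hl (h ▸ ha)⟩
    have hreach : ∀ u ∈ insert l S, (fromEdgeSet ↑(insert s(l, a) E)).Reachable u a := by
      simp only [mem_insert, forall_eq_or_imp]
      exact ⟨hla.reachable, fun u hu => (hT.reachable u hu a ha).mono hmono⟩
    exact fun u hu v hv => (hreach u hu).trans (hreach v hv).symm

lemma one_le_degree (hT : IsTreeOn S E) (hS : 2 ≤ #S) {v : V} (hv : v ∈ S) :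
    1 ≤ degree E v := by
  obtain ⟨w, hw, hwv⟩ := exists_mem_ne hS v
  obtain ⟨p⟩ := hT.reachable v hv w hw
  have hadj := p.adj_snd (Walk.not_nil_of_ne hwv.symm)
  rw [fromEdgeSet_adj] at hadj
  exact card_pos.mpr ⟨_, mem_filter.mpr ⟨hadj.1, Sym2.mem_mk_left _ _⟩⟩

/-- The degrees sum to `2 (|S| - 1)` and are all positive, so one of them is `1`. -/
lemma filter_degree_eq_one_nonempty (hT : IsTreeOn S E) (hS : 2 ≤ #S) :
    ({v ∈ S | degree E v = 1} : Finset V).Nonempty := by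
  by_contra! h
  have hle : ∑ _v ∈ S, 2 ≤ ∑ v ∈ S, degree E v := sum_le_sum fun v hv => by
    have := hT.one_le_degree hS hv
    have : degree E v ≠ 1 := fun h1 => (filter_eq_empty_iff.mp h) hv h1
    omega
  rw [sum_degree hT.not_isDiag hT.mem_of_mem_edge, sum_const, smul_eq_mul] at hle
  have := hT.card_add_one
  omega

lemma erase_leaf (hT : IsTreeOn S E) {l : V} {e : Sym2 V} (hl : l ∈ S)
    (hdeg : degree E l = 1) (he : e ∈ E) (hle : l ∈ e) :
    IsTreeOn (S.erase l) (E.erase e) := by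
  have huniq : ∀ e' ∈ E, l ∈ e' → e' = e := fun e' he' hle' =>
    card_le_one.mp hdeg.le e' (mem_filter.mpr ⟨he', hle'⟩) e (mem_filter.mpr ⟨he, hle⟩)
  have hl_notMem : ∀ e' ∈ E.erase e, l ∉ e' := fun e' he' hle' =>
    (mem_erase.mp he').1 (huniq e' (mem_of_mem_erase he') hle')
  refine ⟨fun e' he' => hT.not_isDiag e' (mem_of_mem_erase he'), fun e' he' v hv =>
    mem_erase.mpr ⟨fun h => hl_notMem e' he' (h ▸ hv),
      hT.mem_of_mem_edge e' (mem_of_mem_erase he') v hv⟩, ?_, ?_⟩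
  · have := hT.card_add_one
    have := card_pos.mpr ⟨e, he⟩
    rw [card_erase_of_mem he, card_erase_of_mem hl]
    omega
  · intro u hu v hv
    obtain ⟨p, hp⟩ :=
      (hT.reachable u (mem_of_mem_erase hu) v (mem_of_mem_erase hv)).exists_isPath
    have hsub : ((fromEdgeSet (E : Set (Sym2 V))).neighborSet l).Subsingleton := by
      intro x hx y hy
      simp only [mem_neighborSet, fromEdgeSet_adj, mem_coe] at hx hy
      exact Sym2.congr_right.mp
        ((huniq _ hx.1 (Sym2.mem_mk_left _ _)).trans (huniq _ hy.1 (Sym2.mem_mk_left _ _)).symm)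
    have hl_supp : l ∉ p.support := hp.isTrail.not_mem_support_of_subsingleton_neighborSet
      (ne_of_mem_erase hu).symm (ne_of_mem_erase hv).symm hsub
    refine ⟨p.transfer _ fun e' he' => ?_⟩
    have he'E := p.edges_subset_edgeSet he'
    rw [SimpleGraph.edgeSet_fromEdgeSet] at he'E ⊢
    refine ⟨mem_erase.mpr ⟨?_, he'E.1⟩, he'E.2⟩
    rintro rfl
    exact hl_supp (p.fst_mem_support_of_mem_edges (by rwa [Sym2.other_spec hle]))

end IsTreeOn

lemma filter_degree_eq_one_eq_sdiff {c : List V} (h : ∀ v ∈ S, degree E v = c.count v + 1) :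
    {v ∈ S | degree E v = 1} = S \ c.toFinset := by
  ext v
  simp +contextual [h, List.count_eq_zero]

lemma degree_insert_leaf {S' : Finset V} {D : Finset (Sym2 V)} {c : List V} {l a : V}
    (hD : ∀ e ∈ D, ∀ v ∈ e, v ∈ S') (hl : l ∉ S') (hlc : l ∉ c) (hla : l ≠ a)
    (hdeg : ∀ v ∈ S', degree D v = c.count v + 1) :
    ∀ v ∈ insert l S', degree (insert s(l, a) D) v = (a :: c).count v + 1 := by
  have hlD : ∀ e ∈ D, l ∉ e := fun e he hle => hl (hD e he l hle)
  rw [forall_mem_insert]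
  refine ⟨?_, fun v hv => ?_⟩
  · rw [degree_insert (fun h => hlD _ h (Sym2.mem_mk_left l a)), degree_eq_zero hlD]
    simp [List.count_eq_zero, hlc, hla]
  · have hvl : v ≠ l := fun h => hl (h ▸ hv)
    rw [degree_insert (fun h => hlD _ h (Sym2.mem_mk_left l a)), hdeg v hv, List.count_cons]
    by_cases hva : v = a <;> simp [hva, hvl, Ne.symm]

lemma mk_eq_and_eq_of_insert_eq {l a a' : V} {D D' : Finset (Sym2 V)} (hD : ∀ e ∈ D, l ∉ e)
    (hD' : ∀ e ∈ D', l ∉ e) (h : insert s(l, a) D = insert s(l, a') D') : a = a' ∧ D = D' := by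
  have hmem : s(l, a) ∈ insert s(l, a') D' := h ▸ mem_insert_self _ _
  obtain rfl : a = a' := by
    rcases mem_insert.mp hmem with h' | h'
    · exact Sym2.congr_right.mp h'
    · exact absurd (Sym2.mem_mk_left l a) (hD' _ h')
  refine ⟨rfl, ?_⟩
  rw [← erase_insert fun h => hD _ h (Sym2.mem_mk_left l a), h,
    erase_insert fun h => hD' _ h (Sym2.mem_mk_left l a)]

namespace IsCodeOn

lemma sdiff_nonempty {c : List V} (hc : IsCodeOn S c) : (S \ c.toFinset).Nonempty := by
  have := le_card_sdiff c.toFinset S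
  have := c.toFinset_card_le
  have := hc.card_eq
  rw [← card_pos]
  omega

lemma tail {a : V} {c : List V} (hc : IsCodeOn S (a :: c)) {l : V}
    (hl : l ∈ S \ (a :: c).toFinset) : IsCodeOn (S.erase l) c where
  mem b hb := by
    rw [mem_sdiff, List.mem_toFinset] at hl
    exact mem_erase.mpr ⟨fun h => hl.2 (h ▸ List.mem_cons_of_mem a hb), hc.mem b (by simp [hb])⟩
  card_eq := by
    rw [card_erase_of_mem (mem_sdiff.mp hl).1, hc.card_eq, List.length_cons]
    rfl

end IsCodeOn

end Degree

section Decode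

variable [LinearOrder V]

def decode : List V → Finset V → Finset (Sym2 V)
  | [], S => if h : S.Nonempty then {s(S.min' h, S.max' h)} else ∅
  | a :: c, S =>
    if h : (S \ (a :: c).toFinset).Nonempty then
      insert s((S \ (a :: c).toFinset).min' h, a)
        (decode c (S.erase ((S \ (a :: c).toFinset).min' h)))
    else ∅

lemma decode_nil (hS : S.Nonempty) : decode [] S = {s(S.min' hS, S.max' hS)} := by
  rw [decode, dif_pos hS]

lemma decode_cons {a : V} {c : List V} (h : (S \ (a :: c).toFinset).Nonempty) :
    decode (a :: c) S = insert s((S \ (a :: c).toFinset).min' h, a)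
      (decode c (S.erase ((S \ (a :: c).toFinset).min' h))) := by
  rw [decode, dif_pos h]

lemma eq_pair_min'_max' (hS : #S = 2) (h : S.Nonempty) : S = {S.min' h, S.max' h} :=
  (eq_of_subset_of_card_le (by simp [insert_subset_iff, min'_mem, max'_mem])
    (by rw [hS, card_pair (min'_lt_max'_of_card S (by omega)).ne])).symm

theorem isTreeOn_decode {c : List V} (hc : IsCodeOn S c) : IsTreeOn S (decode c S) := by
  induction c generalizing S with
  | nil =>
    have h : S.Nonempty := card_pos.mp (by rw [hc.card_eq]; simp)
    rw [decode_nil h]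
    convert isTreeOn_pair (min'_lt_max'_of_card S (by rw [hc.card_eq]; simp)).ne
    exact eq_pair_min'_max' hc.card_eq h
  | cons a c ih =>
    have h := hc.sdiff_nonempty
    have hl := min'_mem _ h
    rw [decode_cons h]
    set l := (S \ (a :: c).toFinset).min' h
    obtain ⟨hlS, hlc⟩ := mem_sdiff.mp hl
    have hal : a ≠ l := fun h => hlc (by simp [h])
    have := (ih (hc.tail hl)).insert_leaf (notMem_erase l S)
      (mem_erase.mpr ⟨hal, hc.mem a (by simp)⟩)
    rwa [insert_erase hlS] at this

theorem degree_decode {c : List V} (hc : IsCodeOn S c) :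
    ∀ v ∈ S, degree (decode c S) v = c.count v + 1 := by
  induction c generalizing S with
  | nil =>
    have h : S.Nonempty := card_pos.mp (by rw [hc.card_eq]; simp)
    intro v hv
    rw [eq_pair_min'_max' hc.card_eq h] at hv
    rw [decode_nil h, degree, filter_singleton, if_pos (by simpa using hv)]
    simp
  | cons a c ih =>
    have h := hc.sdiff_nonempty
    have hl := min'_mem _ h
    rw [decode_cons h]
    set l := (S \ (a :: c).toFinset).min' h
    obtain ⟨hlS, hlc⟩ := mem_sdiff.mp hl
    have := degree_insert_leaf (isTreeOn_decode (hc.tail hl)).mem_of_mem_edge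
      (notMem_erase l S) (fun h : l ∈ c => hlc (by simp [h]))
      (fun h : l = a => hlc (by simp [h])) (ih (hc.tail hl))
    rwa [insert_erase hlS] at this

theorem eq_of_decode_eq {c c' : List V} (hc : IsCodeOn S c) (hc' : IsCodeOn S c')
    (h : decode c S = decode c' S) : c = c' := by
  induction c generalizing S c' with
  | nil =>
    have := hc'.card_eq
    rw [hc.card_eq, List.length_nil] at this
    exact (List.eq_nil_of_length_eq_zero (by omega)).symm
  | cons a r ih =>
    obtain _ | ⟨a', r'⟩ := c'
    · have := hc'.card_eq
      rw [hc.card_eq] at this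
      simp at this
    have hleaves : S \ (a :: r).toFinset = S \ (a' :: r').toFinset := by
      rw [← filter_degree_eq_one_eq_sdiff (degree_decode hc),
        ← filter_degree_eq_one_eq_sdiff (degree_decode hc'), h]
    rw [decode_cons hc.sdiff_nonempty, decode_cons hc'.sdiff_nonempty] at h
    simp_rw [← hleaves] at h
    have hl := min'_mem _ hc.sdiff_nonempty
    set l := (S \ (a :: r).toFinset).min' hc.sdiff_nonempty
    have hc'_tail := hc'.tail (hleaves ▸ hl)
    obtain ⟨rfl, hdec⟩ := mk_eq_and_eq_of_insert_eq
      ((isTreeOn_decode (hc.tail hl)).notMem_of_notMem (notMem_erase l S))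
      ((isTreeOn_decode hc'_tail).notMem_of_notMem (notMem_erase l S)) h
    rw [ih (hc.tail hl) hc'_tail hdec]

namespace IsTreeOn

theorem decode_nil_eq (hT : IsTreeOn S E) (hS : #S = 2) : decode [] S = E := by
  obtain ⟨e, rfl⟩ := card_eq_one.mp (by have := hT.card_add_one; omega : #E = 1)
  have h : S.Nonempty := card_pos.mp (by omega)
  have he_toFinset : e.toFinset = S := eq_of_subset_of_card_le
    (fun v hv => hT.mem_of_mem_edge e (mem_singleton_self e) v (Sym2.mem_toFinset.mp hv))
    (by rw [hS, Sym2.card_toFinset_of_not_isDiag e (hT.not_isDiag e (mem_singleton_self e))])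
  have he : e = s(S.min' h, S.max' h) :=
    (Sym2.mem_and_mem_iff (min'_lt_max'_of_card S (by omega)).ne).mp
      ⟨Sym2.mem_toFinset.mp (by rw [he_toFinset]; exact min'_mem S h),
        Sym2.mem_toFinset.mp (by rw [he_toFinset]; exact max'_mem S h)⟩
  rw [decode_nil h, he]

theorem exists_decode_eq (hT : IsTreeOn S E) (hS : 2 ≤ #S) :
    ∃ c, IsCodeOn S c ∧ decode c S = E := by
  obtain ⟨k, hk⟩ : ∃ k, #S = k + 2 := ⟨#S - 2, by omega⟩
  induction k generalizing S E with
  | zero => exact ⟨[], ⟨by simp, hk⟩, hT.decode_nil_eq hk⟩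
  | succ k ih =>
    have hleaf := min'_mem _ (hT.filter_degree_eq_one_nonempty hS)
    set l := ({v ∈ S | degree E v = 1} : Finset V).min' (hT.filter_degree_eq_one_nonempty hS)
    obtain ⟨hlS, hldeg⟩ := mem_filter.mp hleaf
    obtain ⟨e, he⟩ := card_pos.mp (hldeg ▸ Nat.one_pos : 0 < degree E l)
    obtain ⟨heE, hle⟩ := mem_filter.mp he
    set a := Sym2.Mem.other hle
    have hla : l ≠ a := (Sym2.other_ne (hT.not_isDiag e heE) hle).symm
    have hE : E = insert s(l, a) (E.erase e) := by rw [Sym2.other_spec hle, insert_erase heE]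
    have hT' := hT.erase_leaf hlS hldeg heE hle
    have hS' : #(S.erase l) = k + 2 := by rw [card_erase_of_mem hlS]; omega
    obtain ⟨c, hc, hdec⟩ := ih hT' (by omega) hS'
    have hcode : IsCodeOn S (a :: c) := by
      refine ⟨?_, by rw [List.length_cons]; have := hc.card_eq; omega⟩
      simp only [List.mem_cons, forall_eq_or_imp]
      exact ⟨hT.mem_of_mem_edge e heE a (Sym2.other_mem hle),
        fun b hb => mem_of_mem_erase (hc.mem b hb)⟩
    have hdeg : ∀ v ∈ S, degree E v = (a :: c).count v + 1 := by
      have := degree_insert_leaf hT'.mem_of_mem_edge (notMem_erase l S)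
        (fun h => notMem_erase l S (hc.mem l h)) hla (hdec ▸ degree_decode hc)
      rwa [insert_erase hlS, ← hE] at this
    have hmin : (S \ (a :: c).toFinset).min' hcode.sdiff_nonempty = l := by
      simp_rw [← filter_degree_eq_one_eq_sdiff hdeg]
      rfl
    exact ⟨a :: c, hcode, by rw [decode_cons hcode.sdiff_nonempty, hmin, hdec, ← hE]⟩

end IsTreeOn

variable [Fintype V] {k : ℕ}

def treeOfCode (hV : Fintype.card V = k + 2) (c : List.Vector V k) :
    {T : SimpleGraph V // T.IsTree} :=
  ⟨fromEdgeSet ↑(decode c.toList univ),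
    isTree_fromEdgeSet (isTreeOn_decode (IsCodeOn.univ hV c))⟩

theorem treeOfCode_bijective (hV : Fintype.card V = k + 2) :
    Function.Bijective (treeOfCode hV) := by
  refine ⟨fun c c' h => ?_, fun ⟨T, hT⟩ => ?_⟩
  · have hc := IsCodeOn.univ hV c
    have hc' := IsCodeOn.univ hV c'
    have := congrArg (fun T => T.1.edgeSet) h
    simp only [treeOfCode, (isTreeOn_decode hc).edgeSet_fromEdgeSet,
      (isTreeOn_decode hc').edgeSet_fromEdgeSet, coe_inj] at this
    exact Subtype.ext (eq_of_decode_eq hc hc' this)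
  · classical
    obtain ⟨c, hc, hdec⟩ :=
      (isTreeOn_univ_edgeFinset hT).exists_decode_eq (by rw [card_univ, hV]; omega)
    refine ⟨⟨c, by have := hc.card_eq; rw [card_univ, hV] at this; omega⟩, Subtype.ext ?_⟩
    change fromEdgeSet ↑(decode c univ) = T
    rw [hdec, coe_edgeFinset, fromEdgeSet_edgeSet]

lemma ncard_neighborSet_treeOfCode (hV : Fintype.card V = k + 2) (c : List.Vector V k)
    (v : V) : ((treeOfCode hV c).1.neighborSet v).ncard = c.toList.count v + 1 := by
  have hc := IsCodeOn.univ hV c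
  rw [treeOfCode, ncard_neighborSet_fromEdgeSet (isTreeOn_decode hc).not_isDiag,
    degree_decode hc v (mem_univ v)]

end Decode

theorem exists_equiv_isTree {ι V : Type*} [Finite ι] [Finite V]
    (hV : Nat.card V = Nat.card ι + 2) :
    ∃ Θ : (ι → V) ≃ {T : SimpleGraph V // T.IsTree},
      ∀ f v, ((Θ f).1.neighborSet v).ncard = 1 + Nat.card {j // f j = v} := by
  have := Fintype.ofFinite V
  let : LinearOrder V := LinearOrder.lift' _ (Fintype.equivFin V).injective
  rw [Nat.card_eq_fintype_card] at hV
  let e := Finite.equivFin ι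
  refine ⟨((e.arrowCongr (Equiv.refl V)).trans (Equiv.vectorEquivFin V _).symm).trans
    (Equiv.ofBijective _ (treeOfCode_bijective hV)), fun f v => ?_⟩
  rw [Equiv.trans_apply, Equiv.ofBijective_apply, ncard_neighborSet_treeOfCode, add_comm]
  congr 1
  change (List.Vector.ofFn _).toList.count v = _
  rw [List.Vector.toList_ofFn, List.count_ofFn]
  exact Nat.card_congr (e.symm.subtypeEquiv fun _ => Iff.rfl)

end Pruefer

/-- There is a bijection `Θ` between the functions `f : {2,...,n-1} → [n]` and
the trees on `[n]` (rooted at vertex 1), such that for every `f` and every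
vertex `i`, the degree of `i` in the tree `Θ(f)` equals `1 + |f⁻¹(i)|`. -/
theorem stmt7 (n : ℕ) (hn : 2 ≤ n) :
    ∃ Θ : ({i : ℕ // 2 ≤ i ∧ i ≤ n - 1} → Fin n) ≃
            {G : SimpleGraph (Fin n) // G.IsTree},
      ∀ (f : {i : ℕ // 2 ≤ i ∧ i ≤ n - 1} → Fin n) (i : Fin n),
        (((Θ f : {G : SimpleGraph (Fin n) // G.IsTree}).1.neighborSet i).ncard) =
          1 + Nat.card {j // f j = i} := by
  have : Finite {i : ℕ // 2 ≤ i ∧ i ≤ n - 1} := (Set.finite_Icc 2 (n - 1)).to_subtype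
  exact Pruefer.exists_equiv_isTree (by simp [← Set.mem_Icc]; omega)
end

section
/- The map sending each strictly decreasing function f: {1,...,k} → {1,...,n} to the number Σ_{i=1}^{k} C(f(i)-1, k+1-i) is a bijection from the set of such functions onto {0, 1, ..., C(n,k) - 1}. -/
private def Tsum (k : ℕ) (f : Fin k → ℕ) : ℕ :=
  ∑ i : Fin k, Nat.choose (f i - 1) (k - (i : ℕ))

private lemma Tsum_succ (k : ℕ) (f : Fin (k+1) → ℕ) :
    Tsum (k+1) f = Nat.choose (f 0 - 1) (k+1) + Tsum k (f ∘ Fin.succ) := by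
  rw [Tsum, Fin.sum_univ_succ]
  simp [Tsum, Nat.succ_sub_succ]

private lemma Tsum_lt : ∀ k n (f : Fin k → ℕ), (∀ i, 1 ≤ f i ∧ f i ≤ n) → StrictAnti f →
    Tsum k f < Nat.choose n k := by
  intro k
  induction k with
  | zero => intro n f _ _; simp [Tsum]
  | succ k ih =>
    intro n f hb ha
    have h0 : 1 ≤ f 0 := (hb 0).1
    have hg : ∀ i : Fin k, 1 ≤ (f ∘ Fin.succ) i ∧ (f ∘ Fin.succ) i ≤ f 0 - 1 := by
      intro i
      simp only [Function.comp_apply]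
      refine ⟨(hb i.succ).1, ?_⟩
      have : f i.succ < f 0 := ha (Fin.succ_pos i)
      omega
    have hga : StrictAnti (f ∘ Fin.succ) := fun i j h => ha (Fin.succ_lt_succ_iff.mpr h)
    have htail := ih (f 0 - 1) _ hg hga
    have key : Nat.choose (f 0 - 1) k + Nat.choose (f 0 - 1) (k+1) = Nat.choose (f 0) (k+1) := by
      conv_rhs => rw [show f 0 = (f 0 - 1) + 1 by omega]
      exact (Nat.choose_succ_succ (f 0 - 1) k).symm
    have hle : Nat.choose (f 0) (k+1) ≤ Nat.choose n (k+1) :=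
      Nat.choose_le_choose _ (hb 0).2
    rw [Tsum_succ]
    omega

private lemma Tsum_inj : ∀ k (f g : Fin k → ℕ), (∀ i, 1 ≤ f i) → StrictAnti f →
    (∀ i, 1 ≤ g i) → StrictAnti g → Tsum k f = Tsum k g → f = g := by
  intro k
  induction k with
  | zero => intro f g _ _ _ _ _; funext i; exact i.elim0
  | succ k ih =>
    -- helper : if f 0 < g 0 then Tsum f < Tsum g
    have helper : ∀ (f g : Fin (k+1) → ℕ), (∀ i, 1 ≤ f i) → StrictAnti f →
        (∀ i, 1 ≤ g i) → f 0 < g 0 → Tsum (k+1) f < Tsum (k+1) g := by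
      intro f g hf1 hfa hg1 hlt
      have hfb : ∀ i, 1 ≤ f i ∧ f i ≤ f 0 := fun i => ⟨hf1 i, hfa.antitone (Fin.zero_le i)⟩
      have h1 : Tsum (k+1) f < Nat.choose (f 0) (k+1) := Tsum_lt (k+1) (f 0) f hfb hfa
      have h2 : Nat.choose (f 0) (k+1) ≤ Nat.choose (g 0 - 1) (k+1) :=
        Nat.choose_le_choose _ (by omega)
      have h3 : Nat.choose (g 0 - 1) (k+1) ≤ Tsum (k+1) g := by
        rw [Tsum_succ]; exact Nat.le_add_right _ _
      omega
    intro f g hf1 hfa hg1 hga heq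
    have h0 : f 0 = g 0 := by
      rcases lt_trichotomy (f 0) (g 0) with h | h | h
      · exact absurd heq (by have := helper f g hf1 hfa hg1 h; omega)
      · exact h
      · exact absurd heq (by have := helper g f hg1 hga hf1 h; omega)
    have hfa' : StrictAnti (f ∘ Fin.succ) := fun i j h => hfa (Fin.succ_lt_succ_iff.mpr h)
    have hga' : StrictAnti (g ∘ Fin.succ) := fun i j h => hga (Fin.succ_lt_succ_iff.mpr h)
    have htail : Tsum k (f ∘ Fin.succ) = Tsum k (g ∘ Fin.succ) := by
      have hf := Tsum_succ k f
      have hg := Tsum_succ k g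
      rw [h0] at hf
      omega
    have := ih (f ∘ Fin.succ) (g ∘ Fin.succ) (fun i => hf1 i.succ) hfa'
      (fun i => hg1 i.succ) hga' htail
    funext i
    induction i using Fin.cases with
    | zero => exact h0
    | succ i => exact congrFun this i

private lemma Tsum_surj : ∀ k n N, N < Nat.choose n k →
    ∃ f : Fin k → ℕ, (∀ i, 1 ≤ f i ∧ f i ≤ n) ∧ StrictAnti f ∧ Tsum k f = N := by
  intro k
  induction k with
  | zero =>
    intro n N hN
    simp only [Nat.choose_zero_right, Nat.lt_one_iff] at hN
    exact ⟨fun i => i.elim0, fun i => i.elim0, fun i _ _ => i.elim0, by simp [Tsum, hN]⟩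
  | succ k ih =>
    intro n N hN
    have hkn : k + 1 ≤ n := by
      by_contra h
      rw [Nat.choose_eq_zero_of_lt (by omega)] at hN
      omega
    have hP0 : Nat.choose 0 (k+1) ≤ N := by simp
    set P : ℕ → Prop := fun m => Nat.choose m (k+1) ≤ N with hP
    have c_def : Nat.findGreatest P n = Nat.findGreatest P n := rfl
    set c := Nat.findGreatest P n with hc
    have hcle : Nat.choose c (k+1) ≤ N := Nat.findGreatest_spec (P := P) (Nat.zero_le n) hP0
    have hck : k ≤ c :=
      Nat.le_findGreatest (by omega) (by rw [hP]; simp only []; rw [Nat.choose_eq_zero_of_lt (by omega)]; omega)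
    have hclen : c ≤ n := Nat.findGreatest_le n
    have hcn : c < n := by
      rcases lt_or_eq_of_le hclen with h | h
      · exact h
      · exfalso; rw [h] at hcle; omega
    have hexp : Nat.choose (c+1) (k+1) = Nat.choose c k + Nat.choose c (k+1) :=
      Nat.choose_succ_succ c k
    have hgt : N < Nat.choose (c+1) (k+1) := by
      by_contra h
      have : ¬ P (c+1) := Nat.findGreatest_is_greatest (Nat.lt_succ_self c) (by omega)
      rw [hP] at this
      simp only [not_le] at this
      omega
    have hdiff : N - Nat.choose c (k+1) < Nat.choose c k := by omega
    obtain ⟨g, hgb, hga, hgT⟩ := ih c (N - Nat.choose c (k+1)) hdiff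
    refine ⟨Fin.cases (c+1) g, ?_, ?_, ?_⟩
    · intro i
      induction i using Fin.cases with
      | zero => simp; omega
      | succ i => simp only [Fin.cases_succ]; exact ⟨(hgb i).1, le_trans (hgb i).2 (by omega)⟩
    · intro i j hij
      induction j using Fin.cases with
      | zero => exact absurd hij (Fin.not_lt_zero i)
      | succ j =>
        induction i using Fin.cases with
        | zero =>
          simp only [Fin.cases_succ, Fin.cases_zero]
          have := (hgb j).2; omega
        | succ i =>
          simp only [Fin.cases_succ]
          exact hga (Fin.succ_lt_succ_iff.mp hij)
    · rw [Tsum_succ]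
      have h1 : (Fin.cases (c+1) g : Fin (k+1) → ℕ) ∘ Fin.succ = g := by
        funext i; simp
      rw [h1, hgT]
      simp only [Fin.cases_zero, Nat.add_sub_cancel]
      omega

/-- The map sending a strictly decreasing function `f : {1,...,k} → {1,...,n}`
to `Σ_{i=1}^k C(f(i)-1, k+1-i)` is a bijection onto `{0,...,C(n,k)-1}`. -/
theorem stmt11 (n k : ℕ) :
    Set.BijOn (fun f : Fin k → ℕ => ∑ i : Fin k, Nat.choose (f i - 1) (k - (i : ℕ)))
      {f | (∀ i, 1 ≤ f i ∧ f i ≤ n) ∧ StrictAnti f}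
      (Set.Iio (n.choose k)) := by
  refine ⟨?_, ?_, ?_⟩
  · intro f hf
    exact Tsum_lt k n f hf.1 hf.2
  · intro f hf g hg h
    exact Tsum_inj k f g (fun i => (hf.1 i).1) hf.2 (fun i => (hg.1 i).1) hg.2 h
  · intro N hN
    obtain ⟨f, hb, ha, hT⟩ := Tsum_surj k n N hN
    exact ⟨f, ⟨hb, ha⟩, hT⟩
end

section
/- Define E(j,m) for 0 ≤ j, 0 ≤ m ≤ k-1 by E(0,m) = 0 for m ≠ k-1, E(0,k-1) = 1, and E(j,m) = (m+1)·E(j-1,m) + E(j-1,m+1) (with E(j-1,k) interpreted as 0). Then E(j,m) equals the number of sequences (x_1,...,x_j) with entries in {0,...,k-1} such that appending them to any restricted-growth prefix with maximum m yields a surjective restricted growth function; in particular E(n-1, 0) = S(n,k), the Stirling number of the second kind. -/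
/-- `stirling n k` is the number of set partitions of an `n`-element set into
`k` nonempty blocks (the Stirling number of the second kind). -/
noncomputable def stirling (n k : ℕ) : ℕ :=
  Nat.card {P : Finpartition (Finset.univ : Finset (Fin n)) // P.parts.card = k}

/-- The array `E(j,m)`: `E(0,m) = [m = k-1]` and
`E(j,m) = (m+1)·E(j-1,m) + E(j-1,m+1)`. -/
def E (k : ℕ) : ℕ → ℕ → ℕ
  | 0, m => if m = k - 1 then 1 else 0
  | j + 1, m => (m + 1) * E k j m + E k j (m + 1)

open Finset

/-! Splitting off the first entry `a` of an extension: necessarily `a ≤ m + 1`, and the remaining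
entries extend a prefix with maximum `max m a`. The `m + 1` choices `a ≤ m` keep the maximum and
`a = m + 1` raises it, which is the recursion defining `E`.

For `m = 0` the extensions are the restricted growth functions of length `n` with maximum `k - 1`.
Taking kernels identifies these with the partitions of `[n]` into `k` blocks; the inverse numbers
the blocks in increasing order of their least elements, and a restricted growth function is
determined by its kernel. -/

lemma sup_filter_lt_succ_cons {j : ℕ} (a : ℕ) (y : Fin j → ℕ) (i : Fin j) :
    (univ.filter fun j' => j' < i.succ).sup (Fin.cons a y : Fin (j + 1) → ℕ) =
      max a ((univ.filter fun j' => j' < i).sup y) := by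
  simp [Fin.univ_succ, filter_insert, Fin.succ_pos, filter_map, sup_map, Function.comp_def]

lemma sup_univ_cons {j : ℕ} (a : ℕ) (y : Fin j → ℕ) :
    univ.sup (Fin.cons a y : Fin (j + 1) → ℕ) = max a (univ.sup y) := by
  simp [Fin.univ_succ, sup_map, Function.comp_def]

lemma Finset.card_image_eq_card_image_of_ker {α β γ : Type*} [DecidableEq β] [DecidableEq γ]
    {s : Finset α} {f : α → β} {g : α → γ}
    (h : ∀ a ∈ s, ∀ b ∈ s, f a = f b ↔ g a = g b) :
    #(s.image f) = #(s.image g) := by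
  have hf : s.image f = (s.image fun a => (f a, g a)).image Prod.fst := by rw [image_image]; rfl
  have hg : s.image g = (s.image fun a => (f a, g a)).image Prod.snd := by rw [image_image]; rfl
  rw [hf, hg, card_image_of_injOn (f := Prod.fst), card_image_of_injOn (f := Prod.snd)] <;>
  · intro p hp q hq hpq
    simp only [coe_image, Set.mem_image, mem_coe] at hp hq
    obtain ⟨a, ha, rfl⟩ := hp
    obtain ⟨b, hb, rfl⟩ := hq
    have := h a ha b hb
    simp_all

section ExtendsRGF

/-- Appending `x` to any restricted-growth prefix with maximum `m` gives a restricted growth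
function with maximum `k - 1`; the prefix matters only through `m`. -/
def ExtendsRGF (k m : ℕ) {j : ℕ} (x : Fin j → ℕ) : Prop :=
  (∀ i, x i ≤ 1 + max m ((univ.filter fun j' => j' < i).sup x)) ∧ max m (univ.sup x) = k - 1

variable {k m j : ℕ}

lemma ExtendsRGF.le_pred {x : Fin j → ℕ} (h : ExtendsRGF k m x) (i : Fin j) : x i ≤ k - 1 :=
  h.2 ▸ le_max_of_le_right (le_sup (mem_univ i))

instance (k m j : ℕ) : Finite {x : Fin j → ℕ // ExtendsRGF k m x} :=
  Finite.of_injective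
    (fun x i => (⟨x.1 i, Nat.lt_succ_of_le (x.2.le_pred i)⟩ : Fin (k - 1 + 1)))
    fun _ _ h => Subtype.ext (funext fun i => congrArg Fin.val (congrFun h i))

lemma extendsRGF_fin_zero_iff {x : Fin 0 → ℕ} : ExtendsRGF k m x ↔ m = k - 1 := by
  simp [ExtendsRGF]

lemma extendsRGF_cons_iff {a : ℕ} {y : Fin j → ℕ} :
    ExtendsRGF k m (Fin.cons a y : Fin (j + 1) → ℕ) ↔
      a ≤ m + 1 ∧ ExtendsRGF k (max m a) y := by
  simp only [ExtendsRGF, Fin.forall_fin_succ, Fin.cons_zero, Fin.cons_succ,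
    sup_filter_lt_succ_cons, sup_univ_cons, max_assoc]
  simp [add_comm 1 m, and_assoc]

def extendsRGFSuccEquiv (k m j : ℕ) :
    {x : Fin (j + 1) → ℕ // ExtendsRGF k m x} ≃
      Σ a : Fin (m + 2), {y : Fin j → ℕ // ExtendsRGF k (max m a) y} where
  toFun x :=
    have h := extendsRGF_cons_iff.1 ((Fin.cons_self_tail x.1).symm ▸ x.2)
    ⟨⟨x.1 0, Nat.lt_succ_of_le h.1⟩, ⟨Fin.tail x.1, h.2⟩⟩
  invFun p := ⟨Fin.cons p.1 p.2.1, extendsRGF_cons_iff.2 ⟨by omega, p.2.2⟩⟩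
  left_inv x := Subtype.ext (Fin.cons_self_tail x.1)
  right_inv _ := rfl

lemma card_extendsRGF_succ :
    Nat.card {x : Fin (j + 1) → ℕ // ExtendsRGF k m x} =
      (m + 1) * Nat.card {y : Fin j → ℕ // ExtendsRGF k m y} +
        Nat.card {y : Fin j → ℕ // ExtendsRGF k (m + 1) y} := by
  rw [Nat.card_congr (extendsRGFSuccEquiv k m j), Nat.card_sigma, Fin.sum_univ_castSucc]
  have hle (a : Fin (m + 1)) : max m (a : ℕ) = m := max_eq_left (Nat.le_of_lt_succ a.2)
  simp [hle]

theorem card_extendsRGF (k j m : ℕ) :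
    Nat.card {x : Fin j → ℕ // ExtendsRGF k m x} = E k j m := by
  induction j generalizing m with
  | zero =>
    by_cases hm : m = k - 1 <;> simp [E, hm, extendsRGF_fin_zero_iff]
  | succ j ih => rw [card_extendsRGF_succ, ih, ih]; rfl

end ExtendsRGF

section RGF

variable {α : Type*}

/-- Restricted growth, phrased as: every value below `f i` occurs before `i`
(equivalent to `f 0 = 0 ∧ f i ≤ 1 + max_{j < i} f j`, see `isRGF_iff_le_one_add_sup`). -/
def IsRGF [LT α] (f : α → ℕ) : Prop :=
  ∀ i, ∀ c < f i, ∃ j < i, f j = c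

variable [LinearOrder α] {f g : α → ℕ}

lemma IsRGF.image_eq_range [Fintype α] [Nonempty α] (hf : IsRGF f) :
    univ.image f = range (univ.sup f + 1) := by
  ext c
  simp only [mem_image, mem_univ, true_and, mem_range, Nat.lt_succ_iff]
  refine ⟨fun ⟨a, ha⟩ => ha ▸ le_sup (mem_univ a), fun hc => ?_⟩
  obtain ⟨b, -, hb⟩ := exists_mem_eq_sup univ univ_nonempty f
  rcases (hb ▸ hc).eq_or_lt with rfl | hlt
  · exact ⟨b, rfl⟩
  · obtain ⟨j, -, hj⟩ := hf b c hlt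
    exact ⟨j, hj⟩

lemma IsRGF.le_of_eqOn_Iio (hg : IsRGF g) (hker : ∀ a b, f a = f b → g a = g b) {i : α}
    (h : ∀ j < i, f j = g j) : g i ≤ f i := by
  by_contra! hlt
  obtain ⟨j, hj, hgj⟩ := hg i (f i) hlt
  have := hker j i ((h j hj).trans hgj)
  omega

lemma IsRGF.ext [Finite α] (hf : IsRGF f) (hg : IsRGF g)
    (hker : ∀ a b, f a = f b ↔ g a = g b) :
    f = g := by
  funext i
  induction i using WellFoundedLT.induction with
  | _ i ih =>
    exact le_antisymm (hf.le_of_eqOn_Iio (fun a b => (hker a b).2) fun j hj => (ih j hj).symm)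
      (hg.le_of_eqOn_Iio (fun a b => (hker a b).1) ih)

end RGF

instance Setoid.decidableRelKer {α β : Type*} [DecidableEq β] (f : α → β) :
    DecidableRel (Setoid.ker f) :=
  fun a b => decidable_of_iff (f a = f b) Setoid.ker_def.symm

namespace Finpartition

section

variable {α : Type*} [DecidableEq α]

lemma image_part {s : Finset α} (P : Finpartition s) : s.image P.part = P.parts := by
  ext t
  simp only [mem_image]
  refine ⟨fun ⟨a, ha, hat⟩ => hat ▸ P.part_mem.2 ha, fun ht => ?_⟩
  obtain ⟨a, ha, hat⟩ := P.part_surjOn ht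
  exact ⟨a, ha, hat⟩

variable [Fintype α]

lemma part_eq_part_iff_mem {P : Finpartition (univ : Finset α)} {a b : α} :
    P.part a = P.part b ↔ b ∈ P.part a := by
  rw [P.mem_part_iff_part_eq_part (mem_univ b) (mem_univ a), eq_comm]

lemma part_ofSetoid_eq_part_iff {r : Setoid α} [DecidableRel r] {a b : α} :
    (ofSetoid r).part a = (ofSetoid r).part b ↔ r a b := by
  rw [part_eq_part_iff_mem, mem_part_ofSetoid_iff_rel]

lemma ofSetoid_eq {r : Setoid α} [DecidableRel r] {P : Finpartition (univ : Finset α)}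
    (h : ∀ a b, r a b ↔ P.part a = P.part b) : ofSetoid r = P := by
  have hpart : (ofSetoid r).part = P.part := by
    funext a
    ext b
    rw [mem_part_ofSetoid_iff_rel, h, part_eq_part_iff_mem]
  ext1
  rw [← image_part, ← image_part, hpart]

lemma card_parts_ofSetoid_ker {β : Type*} [DecidableEq β] (f : α → β)
    [DecidableRel (Setoid.ker f)] :
    #(ofSetoid (Setoid.ker f)).parts = #(univ.image f) := by
  rw [← image_part]
  exact card_image_eq_card_image_of_ker fun a _ b _ =>
    part_ofSetoid_eq_part_iff.trans Setoid.ker_def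

end

section BlockIndex

variable {α : Type*} [LinearOrder α] [Fintype α] (P : Finpartition (univ : Finset α))

def partMin (a : α) : α := (P.part a).min' (P.part_nonempty.2 (mem_univ a))

lemma partMin_le (a : α) : P.partMin a ≤ a := min'_le _ _ (P.mem_part (mem_univ a))

lemma part_partMin (a : α) : P.part (P.partMin a) = P.part a :=
  (part_eq_part_iff_mem.2 (min'_mem _ _)).symm

lemma partMin_eq_partMin_iff {a b : α} : P.partMin a = P.partMin b ↔ P.part a = P.part b := by
  refine ⟨fun h => ?_, fun h => ?_⟩
  · rw [← P.part_partMin a, h, P.part_partMin]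
  · unfold partMin
    congr 1

def partMins : Finset α := univ.image P.partMin

lemma partMin_mem_partMins (a : α) : P.partMin a ∈ P.partMins := mem_image_of_mem _ (mem_univ a)

lemma partMin_eq_self {b : α} (hb : b ∈ P.partMins) : P.partMin b = b := by
  obtain ⟨a, -, rfl⟩ := mem_image.1 hb
  exact (P.partMin_eq_partMin_iff).2 (P.part_partMin a)

/-- Blocks are numbered `0, 1, …` in increasing order of their least elements. -/
def blockIndex (a : α) : ℕ :=
  (P.partMins.orderIsoOfFin rfl).symm ⟨P.partMin a, P.partMin_mem_partMins a⟩

lemma blockIndex_eq_blockIndex_iff {a b : α} :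
    P.blockIndex a = P.blockIndex b ↔ P.part a = P.part b := by
  simp [blockIndex, Fin.val_inj, partMin_eq_partMin_iff]

lemma isRGF_blockIndex : IsRGF P.blockIndex := by
  intro i c hc
  set e := P.partMins.orderIsoOfFin rfl
  set x : Fin #P.partMins := ⟨c, hc.trans (Fin.is_lt _)⟩
  have hx : x < e.symm ⟨P.partMin i, P.partMin_mem_partMins i⟩ := hc
  refine ⟨e x, (Subtype.coe_lt_coe.2 (e.lt_symm_apply.1 hx)).trans_le (P.partMin_le i), ?_⟩
  have hmin : (⟨P.partMin (e x), P.partMin_mem_partMins _⟩ : P.partMins) = e x :=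
    Subtype.ext (P.partMin_eq_self (e x).2)
  rw [blockIndex, hmin, e.symm_apply_apply]

end BlockIndex

end Finpartition

section RGFEquiv

variable {α : Type*} [LinearOrder α] [Fintype α]

def rgfEquivFinpartition : {f : α → ℕ // IsRGF f} ≃ Finpartition (univ : Finset α) where
  toFun f := Finpartition.ofSetoid (Setoid.ker f.1)
  invFun P := ⟨P.blockIndex, P.isRGF_blockIndex⟩
  left_inv f := Subtype.ext <| IsRGF.ext (Finpartition.isRGF_blockIndex _) f.2 fun a b => by
    rw [Finpartition.blockIndex_eq_blockIndex_iff, Finpartition.part_ofSetoid_eq_part_iff,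
      Setoid.ker_def]
  right_inv P := Finpartition.ofSetoid_eq fun a b => by
    rw [Setoid.ker_def, Finpartition.blockIndex_eq_blockIndex_iff]

lemma card_parts_rgfEquivFinpartition [Nonempty α] (f : {f : α → ℕ // IsRGF f}) :
    #(rgfEquivFinpartition f).parts = univ.sup f.1 + 1 := by
  rw [rgfEquivFinpartition, Equiv.coe_fn_mk, Finpartition.card_parts_ofSetoid_ker,
    f.2.image_eq_range, card_range]

def rgfEquivFinpartitionCard [Nonempty α] {k : ℕ} (hk : 1 ≤ k) :
    {f : α → ℕ // IsRGF f ∧ univ.sup f = k - 1} ≃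
      {P : Finpartition (univ : Finset α) // #P.parts = k} :=
  (Equiv.subtypeSubtypeEquivSubtypeInter _ _).symm.trans <|
    rgfEquivFinpartition.subtypeEquiv fun f => by
      rw [card_parts_rgfEquivFinpartition]
      omega

end RGFEquiv

lemma IsRGF.apply_zero {n : ℕ} {f : Fin (n + 1) → ℕ} (hf : IsRGF f) : f 0 = 0 := by
  by_contra h
  obtain ⟨j, hj, -⟩ := hf 0 0 (Nat.pos_of_ne_zero h)
  exact Fin.not_lt_zero j hj

lemma isRGF_iff_le_one_add_sup {n : ℕ} {f : Fin (n + 1) → ℕ} :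
    IsRGF f ↔ f 0 = 0 ∧ ∀ i, f i ≤ 1 + (univ.filter fun j => j < i).sup f := by
  refine ⟨fun hf => ⟨hf.apply_zero, fun i => ?_⟩, fun ⟨h0, hf⟩ i => ?_⟩
  · rcases Nat.eq_zero_or_pos (f i) with hi | hi
    · omega
    · obtain ⟨j, hj, hfj⟩ := hf i (f i - 1) (by omega)
      have := le_sup (f := f) (s := univ.filter fun j => j < i) (mem_filter.2 ⟨mem_univ j, hj⟩)
      omega
  · induction i using WellFoundedLT.induction with
    | _ i ih =>
      intro c hc
      rcases eq_or_ne i 0 with rfl | hi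
      · omega
      obtain ⟨b, hb, hfb⟩ := exists_mem_eq_sup (univ.filter fun j => j < i)
        ⟨0, mem_filter.2 ⟨mem_univ 0, Fin.pos_iff_ne_zero.2 hi⟩⟩ f
      have hbi := (mem_filter.1 hb).2
      have := hf i
      rcases (show c ≤ f b by omega).eq_or_lt with rfl | hlt
      · exact ⟨b, hbi, rfl⟩
      · obtain ⟨j, hj, hfj⟩ := ih b hbi c hlt
        exact ⟨j, hj.trans hbi, hfj⟩

lemma extendsRGF_zero_iff {k j : ℕ} {x : Fin j → ℕ} :
    ExtendsRGF k 0 x ↔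
      IsRGF (Fin.cons 0 x : Fin (j + 1) → ℕ) ∧
        univ.sup (Fin.cons 0 x : Fin (j + 1) → ℕ) = k - 1 := by
  have := extendsRGF_cons_iff (k := k) (m := 0) (a := 0) (y := x)
  simp only [zero_le, true_and, max_self] at this
  rw [← this, ExtendsRGF, isRGF_iff_le_one_add_sup]
  simp

def extendsRGFZeroEquiv (k j : ℕ) :
    {x : Fin j → ℕ // ExtendsRGF k 0 x} ≃
      {f : Fin (j + 1) → ℕ // IsRGF f ∧ univ.sup f = k - 1} where
  toFun x := ⟨Fin.cons 0 x.1, extendsRGF_zero_iff.1 x.2⟩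
  invFun f := ⟨Fin.tail f.1, extendsRGF_zero_iff.2 <| by
    rw [← f.2.1.apply_zero, Fin.cons_self_tail]
    exact f.2⟩
  left_inv _ := rfl
  right_inv f := Subtype.ext <| by
    change Fin.cons 0 (Fin.tail f.1) = f.1
    rw [← f.2.1.apply_zero, Fin.cons_self_tail]

/-- `E(j,m)` counts the sequences `(x_1,...,x_j)` which extend any
restricted-growth prefix with maximum `m` to a surjective restricted growth
function onto `{0,...,k-1}`; in particular `E(n-1,0) = S(n,k)`. -/
theorem stmt15 (k : ℕ) (hk : 1 ≤ k) :
    (∀ j m : ℕ,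
      Nat.card {x : Fin j → ℕ //
        (∀ i : Fin j,
          x i ≤ 1 + max m ((Finset.univ.filter fun j' => j' < i).sup x)) ∧
        max m (Finset.univ.sup x) = k - 1} = E k j m) ∧
    ∀ n : ℕ, 1 ≤ n → E k (n - 1) 0 = stirling n k := by
  refine ⟨card_extendsRGF k, fun n hn => ?_⟩
  obtain ⟨j, rfl⟩ := Nat.exists_eq_add_of_le' hn
  rw [Nat.add_sub_cancel, ← card_extendsRGF, stirling]
  exact Nat.card_congr ((extendsRGFZeroEquiv k j).trans (rgfEquivFinpartitionCard hk))
end
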